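/- For every odd integer n ≥ 3, the 2n×2n matrix 𝒜_n = diag(A_n, A_n) is symmetric and positive definite, and 𝒜_n⁻¹ ℬ_n is skew-symmetric, where ℬ_n = [[0, B_n],[B_n, 0]]. -/

import Mathlib

open Matrix

/-- The n×n circulant matrix with 1 on the diagonal and 1/2 on the (mod n)
super- and sub-diagonals. -/
noncomputable def matA (n : ℕ) [NeZero n] : Matrix (Fin n) (Fin n) ℝ :=
  fun i j => if j = i then 1 else if j = i + 1 ∨ j = i - 1 then (1 : ℝ)/2 else 0

/-- The n×n circulant central-difference matrix with 1 on the (mod n)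
super-diagonal and -1 on the (mod n) sub-diagonal. -/
def matB (n : ℕ) [NeZero n] : Matrix (Fin n) (Fin n) ℝ :=
  fun i j => if j = i + 1 then 1 else if j = i - 1 then -1 else 0

/-- The 2n×2n block-diagonal matrix diag(A, A). -/
noncomputable def calA (n : ℕ) [NeZero n] : Matrix (Fin n ⊕ Fin n) (Fin n ⊕ Fin n) ℝ :=
  Matrix.fromBlocks (matA n) 0 0 (matA n)

/-- The 2n×2n block matrix [[0, B],[B, 0]]. -/
def calB (n : ℕ) [NeZero n] : Matrix (Fin n ⊕ Fin n) (Fin n ⊕ Fin n) ℝ :=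
  Matrix.fromBlocks 0 (matB n) (matB n) 0

/-!
The quadratic form of `A_n` is `½ ∑ᵢ (xᵢ + xᵢ₊₁)²`, indices mod `n`. It vanishes only when `x`
alternates in sign around the `n`-cycle, which for odd `n` forces `x = 0`; so `A_n`, and with it
`𝒜_n`, is positive definite. `A_n` and `B_n` are circulant, hence commute, and then so do `𝒜_n⁻¹`
and `ℬ_n`; as `𝒜_n` is symmetric and `ℬ_n` skew, `(𝒜_n⁻¹ ℬ_n)ᵀ = -ℬ_n 𝒜_n⁻¹ = -𝒜_n⁻¹ ℬ_n`.
-/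

namespace Matrix

variable {m n α : Type*} [Fintype n]

theorem commute_nonsing_inv_left [DecidableEq n] [CommRing α] {A B : Matrix n n α}
    (h : Commute A B) : Commute A⁻¹ B := by
  by_cases hA : IsUnit A
  · obtain ⟨u, rfl⟩ := hA
    rw [← coe_units_inv]
    exact h.units_inv_left
  · rw [nonsing_inv_eq_ringInverse, Ring.inverse_non_unit _ hA]
    exact Commute.zero_left B

theorem transpose_nonsing_inv_mul_eq_neg [DecidableEq n] [CommRing α] {A B : Matrix n n α}
    (hA : Aᵀ = A) (hB : Bᵀ = -B) (hAB : Commute A B) : (A⁻¹ * B)ᵀ = -(A⁻¹ * B) := by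
  rw [transpose_mul, transpose_nonsing_inv, hA, hB, neg_mul, (commute_nonsing_inv_left hAB).eq]

theorem PosDef.fromBlocks_zero [Fintype m] [Ring α] [PartialOrder α] [StarRing α]
    [IsOrderedAddMonoid α] {A : Matrix m m α} {D : Matrix n n α}
    (hA : A.PosDef) (hD : D.PosDef) : (fromBlocks A 0 0 D).PosDef := by
  refine .of_dotProduct_mulVec_pos (hA.isHermitian.fromBlocks (by simp) hD.isHermitian) ?_
  intro x hx
  obtain ⟨x₁, x₂, rfl⟩ : ∃ x₁ x₂, x = Sum.elim x₁ x₂ := ⟨_, _, (Sum.elim_comp_inl_inr x).symm⟩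
  simp only [fromBlocks_mulVec, Function.star_sumElim, sumElim_dotProduct_sumElim,
    Sum.elim_comp_inl, Sum.elim_comp_inr, zero_mulVec, add_zero, zero_add]
  rcases eq_or_ne x₁ 0 with rfl | h
  · have h₂ : x₂ ≠ 0 := by rintro rfl; exact hx Sum.elim_zero_zero
    simpa using hD.dotProduct_mulVec_pos h₂
  · exact add_pos_of_pos_of_nonneg (hA.dotProduct_mulVec_pos h)
      (hD.posSemidef.dotProduct_mulVec_nonneg _)

end Matrix

open Fin.CommRing in
theorem Fin.eq_zero_of_forall_apply_add_one_eq_neg {n : ℕ} [NeZero n] (hn : Odd n) {R : Type*}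
    [Ring R] [NoZeroDivisors R] [CharZero R] {x : Fin n → R}
    (hx : ∀ i, x (i + 1) = -x i) : x = 0 := by
  have hpow : ∀ k : ℕ, x k = (-1) ^ k * x 0 := by
    intro k
    induction k with
    | zero => simp
    | succ k ih => rw [Nat.cast_succ, hx, ih, pow_succ]; noncomm_ring
  have h0 : x 0 = 0 := by
    have := hpow n
    rwa [Fin.natCast_self, hn.neg_one_pow, neg_one_mul, CharZero.eq_neg_self_iff] at this
  ext i
  simpa [h0] using hpow i

open Fin.CommRing in
theorem Fin.add_one_ne_sub_one {n : ℕ} [NeZero n] (hn : 3 ≤ n) (i : Fin n) : i + 1 ≠ i - 1 := by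
  intro h
  have h2 : (2 : Fin n) = 0 := by linear_combination h
  simpa [Nat.mod_eq_of_lt (by omega : 2 < n)] using congrArg Fin.val h2

section

variable {n : ℕ} [NeZero n]

theorem matA_eq_circulant : matA n = circulant fun d => matA n d 0 := by
  ext i j
  simp only [matA, circulant_apply]
  grind

theorem matB_eq_circulant : matB n = circulant fun d => matB n d 0 := by
  ext i j
  simp only [matB, circulant_apply]
  grind

theorem commute_matA_matB : Commute (matA n) (matB n) := by
  rw [matA_eq_circulant, matB_eq_circulant]
  exact circulant_mul_comm _ _

theorem matA_transpose : (matA n)ᵀ = matA n := by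
  ext i j
  simp only [matA, transpose_apply]
  grind

theorem matB_transpose (hn : 3 ≤ n) : (matB n)ᵀ = -matB n := by
  ext i j
  have := Fin.add_one_ne_sub_one hn j
  simp only [transpose_apply, Matrix.neg_apply, matB]
  grind

open Fin.CommRing in
theorem matA_apply (hn : 3 ≤ n) (i j : Fin n) :
    matA n i j = (if j = i then 1 else 0) + (if j = i + 1 then 1 / 2 else 0)
      + (if j = i - 1 then 1 / 2 else 0) := by
  have h₁ := Fin.add_one_ne_sub_one hn i
  have h₂ : i ≠ i + 1 := fun h => h₁ (by linear_combination -2 * h)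
  have h₃ : i ≠ i - 1 := fun h => h₁ (by linear_combination 2 * h)
  simp only [matA]
  grind

theorem matA_mulVec_apply (hn : 3 ≤ n) (x : Fin n → ℝ) (i : Fin n) :
    (matA n *ᵥ x) i = x i + (x (i + 1) + x (i - 1)) / 2 := by
  simp only [mulVec, dotProduct, matA_apply hn, one_div, add_mul, ite_mul, one_mul, zero_mul,
    Finset.sum_add_distrib, Finset.sum_ite_eq', Finset.mem_univ, ↓reduceIte]
  ring

theorem dotProduct_matA_mulVec (hn : 3 ≤ n) (x : Fin n → ℝ) :
    x ⬝ᵥ matA n *ᵥ x = (∑ i, (x i + x (i + 1)) ^ 2) / 2 := by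
  have hshift (f : Fin n → ℝ) : ∑ i, f (i + 1) = ∑ i, f i := Equiv.sum_comp (Equiv.addRight 1) f
  have hsq := hshift fun i => x i ^ 2
  have hprod : ∑ i, x i * x (i - 1) = ∑ i, x i * x (i + 1) := by
    rw [← hshift]
    simp only [add_sub_cancel_right, mul_comm]
  calc x ⬝ᵥ matA n *ᵥ x
      = ∑ i, x i ^ 2 + (∑ i, x i * x (i + 1) + ∑ i, x i * x (i - 1)) / 2 := by
        simp only [dotProduct, matA_mulVec_apply hn, Finset.sum_div, ← Finset.sum_add_distrib]
        exact Finset.sum_congr rfl fun i _ => by ring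
    _ = (∑ i, (x i + x (i + 1)) ^ 2) / 2 := by
        simp only [add_sq, mul_assoc, Finset.sum_add_distrib, ← Finset.mul_sum, hsq, hprod]
        ring

theorem matA_posDef (hn : 3 ≤ n) (hodd : Odd n) : (matA n).PosDef := by
  refine .of_dotProduct_mulVec_pos (by simpa [IsHermitian] using matA_transpose) fun x hx => ?_
  rw [star_trivial, dotProduct_matA_mulVec hn]
  obtain ⟨i, hi⟩ : ∃ i, x i + x (i + 1) ≠ 0 := by
    by_contra! h
    exact hx (Fin.eq_zero_of_forall_apply_add_one_eq_neg hodd fun i => by linarith [h i])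
  have hpos : 0 < ∑ j, (x j + x (j + 1)) ^ 2 :=
    Finset.sum_pos' (fun j _ => sq_nonneg _) ⟨i, Finset.mem_univ i, by positivity⟩
  positivity

theorem calA_transpose : (calA n)ᵀ = calA n := by
  simp [calA, fromBlocks_transpose, matA_transpose]

theorem calA_posDef (hn : 3 ≤ n) (hodd : Odd n) : (calA n).PosDef :=
  (matA_posDef hn hodd).fromBlocks_zero (matA_posDef hn hodd)

theorem calB_transpose (hn : 3 ≤ n) : (calB n)ᵀ = -calB n := by
  simp [calB, fromBlocks_transpose, matB_transpose hn, fromBlocks_neg]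

theorem commute_calA_calB : Commute (calA n) (calB n) := by
  simp [Commute, SemiconjBy, calA, calB, fromBlocks_multiply, commute_matA_matB.eq]

end

theorem calA_symm_posDef_and_calAinv_calB_skew (n : ℕ) [NeZero n]
    (hn : 3 ≤ n) (hodd : Odd n) :
    (calA n)ᵀ = calA n ∧
    (∀ x : Fin n ⊕ Fin n → ℝ, x ≠ 0 → 0 < x ⬝ᵥ (calA n) *ᵥ x) ∧
    ((calA n)⁻¹ * calB n)ᵀ = -((calA n)⁻¹ * calB n) :=
  ⟨calA_transpose, fun _ hx => by simpa using (calA_posDef hn hodd).dotProduct_mulVec_pos hx,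
    transpose_nonsing_inv_mul_eq_neg calA_transpose (calB_transpose hn) commute_calA_calB⟩
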